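/- In the ring ℝ[[x,y]] of formal power series in two variables over ℝ, let I be the ideal generated by 5x⁴+2xy² and 2x²y+5y⁴ (the two partial derivatives of f = x⁵+x²y²+y⁵), and let A = ℝ[[x,y]]/I. Then the class [f] of f = x⁵+x²y²+y⁵ in A is nonzero, and the ideal of A generated by [f] consists entirely of real scalar multiples of [f]; that is, for every u ∈ A there exists c ∈ ℝ with u·[f] = c·[f]. -/

import Mathlib

/-- The variable `x` in `ℝ[[x,y]]`. -/
noncomputable def psX : MvPowerSeries (Fin 2) ℝ := MvPowerSeries.X 0

/-- The variable `y` in `ℝ[[x,y]]`. -/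
noncomputable def psY : MvPowerSeries (Fin 2) ℝ := MvPowerSeries.X 1

/-- The ideal `I = (5x⁴+2xy², 2x²y+5y⁴)` of `ℝ[[x,y]]` generated by the two partial
derivatives of `f = x⁵+x²y²+y⁵`. -/
noncomputable def idealI : Ideal (MvPowerSeries (Fin 2) ℝ) :=
  Ideal.span {5 * psX ^ 4 + 2 * psX * psY ^ 2, 2 * psX ^ 2 * psY + 5 * psY ^ 4}

/-!
Write `φᵢⱼ` for the coefficient of `xⁱyʲ` and `g₁, g₂` for the generators of `I`. The linear form
`φ ↦ φ₅₀ + φ₀₅ - (5/2)·φ₂₂` vanishes on `I`: on `a·g₁` and `b·g₂` only the linear coefficients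
of `a` and `b` reach these three monomials, and the weights cancel them. It takes the value `-1/2`
on `f`, so `[f] ≠ 0`. On the other hand `x·f` and `y·f` lie in `I` up to the factor `20 - 125xy`,
which is a unit of `ℝ[[x,y]]`; hence the maximal ideal `(x, y)` kills `[f]`, and
`u·[f] = u(0)·[f]`.
-/

open MvPowerSeries Finsupp

noncomputable def bidegree (i j : ℕ) : Fin 2 →₀ ℕ := single 0 i + single 1 j

@[simp]
theorem bidegree_apply_zero (i j : ℕ) : bidegree i j 0 = i := by simp [bidegree]

@[simp]
theorem bidegree_apply_one (i j : ℕ) : bidegree i j 1 = j := by simp [bidegree]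

@[simp]
theorem bidegree_le_bidegree {a b i j : ℕ} : bidegree a b ≤ bidegree i j ↔ a ≤ i ∧ b ≤ j := by
  simp [Finsupp.le_def, Fin.forall_fin_two]

@[simp]
theorem bidegree_inj {a b i j : ℕ} : bidegree a b = bidegree i j ↔ a = i ∧ b = j := by
  simp [Finsupp.ext_iff, Fin.forall_fin_two]

theorem bidegree_sub_bidegree (a b i j : ℕ) :
    bidegree i j - bidegree a b = bidegree (i - a) (j - b) := by
  ext k
  fin_cases k <;> simp

namespace MvPowerSeries

variable {R : Type*}

section CommSemiring

variable [CommSemiring R]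

theorem monomial_bidegree (a b : ℕ) (c : R) :
    monomial (bidegree a b) c = C c * X 0 ^ a * X 1 ^ b := by
  rw [X_pow_eq, X_pow_eq, ← monomial_zero_eq_C_apply, monomial_mul_monomial,
    monomial_mul_monomial]
  simp [bidegree]

theorem coeff_bidegree_mul_monomial (φ : MvPowerSeries (Fin 2) R) (i j a b : ℕ) (c : R) :
    coeff (bidegree i j) (φ * monomial (bidegree a b) c) =
      if a ≤ i ∧ b ≤ j then coeff (bidegree (i - a) (j - b)) φ * c else 0 := by
  simp only [coeff_mul_monomial, bidegree_le_bidegree, bidegree_sub_bidegree]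

end CommSemiring

section CommRing

variable [CommRing R]

theorem mem_span_X_zero_X_one_of_constantCoeff_eq_zero {φ : MvPowerSeries (Fin 2) R}
    (hφ : constantCoeff φ = 0) : φ ∈ Ideal.span {X 0, X 1} := by
  let ψ : MvPowerSeries (Fin 2) R := fun m => if m 0 = 0 then coeff m φ else 0
  have hψ (m : Fin 2 →₀ ℕ) : coeff m ψ = if m 0 = 0 then coeff m φ else 0 := rfl
  obtain ⟨p, hp⟩ : (X 0 : MvPowerSeries (Fin 2) R) ∣ φ - ψ := by
    rw [X_dvd_iff]
    intro m hm0
    simp [hψ, hm0]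
  obtain ⟨q, hq⟩ : (X 1 : MvPowerSeries (Fin 2) R) ∣ ψ := by
    rw [X_dvd_iff]
    intro m hm1
    rw [hψ]
    split_ifs with hm0
    · obtain rfl : m = 0 := by
        ext i
        fin_cases i <;> simp [hm0, hm1]
      exact hφ
    · rfl
  exact Ideal.mem_span_pair.mpr ⟨p, q, by linear_combination -hp - hq⟩

theorem mk_mul_eq_constantCoeff_smul {I : Ideal (MvPowerSeries (Fin 2) R)}
    {f : MvPowerSeries (Fin 2) R} (h0 : X 0 * f ∈ I) (h1 : X 1 * f ∈ I)
    (g : MvPowerSeries (Fin 2) R) :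
    Ideal.Quotient.mk I g * Ideal.Quotient.mk I f = constantCoeff g • Ideal.Quotient.mk I f := by
  have hg : constantCoeff (g - C (constantCoeff g)) = 0 := by simp
  obtain ⟨p, q, hpq⟩ :=
    Ideal.mem_span_pair.mp (mem_span_X_zero_X_one_of_constantCoeff_eq_zero hg)
  have hsmul : constantCoeff g • Ideal.Quotient.mk I f =
      Ideal.Quotient.mk I (C (constantCoeff g) * f) := by
    rw [← smul_eq_C_mul]
    rfl
  rw [hsmul, ← map_mul, Ideal.Quotient.mk_eq_mk_iff_sub_mem]
  have hdiff : g * f - C (constantCoeff g) * f = p * (X 0 * f) + q * (X 1 * f) := by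
    linear_combination f * hpq.symm
  rw [hdiff]
  exact I.add_mem (I.mul_mem_left p h0) (I.mul_mem_left q h1)

end CommRing

end MvPowerSeries

noncomputable def annihilatingForm : MvPowerSeries (Fin 2) ℝ →ₗ[ℝ] ℝ :=
  coeff (bidegree 5 0) + coeff (bidegree 0 5) - (5 / 2 : ℝ) • coeff (bidegree 2 2)

theorem annihilatingForm_mul_partialX (a : MvPowerSeries (Fin 2) ℝ) :
    annihilatingForm (a * (5 * psX ^ 4 + 2 * psX * psY ^ 2)) = 0 := by
  have hg : 5 * psX ^ 4 + 2 * psX * psY ^ 2 =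
      monomial (bidegree 4 0) 5 + monomial (bidegree 1 2) 2 := by
    simp only [monomial_bidegree, psX, psY, map_ofNat]
    ring
  rw [hg, mul_add]
  simp [annihilatingForm, coeff_bidegree_mul_monomial]
  ring

theorem annihilatingForm_mul_partialY (b : MvPowerSeries (Fin 2) ℝ) :
    annihilatingForm (b * (2 * psX ^ 2 * psY + 5 * psY ^ 4)) = 0 := by
  have hg : 2 * psX ^ 2 * psY + 5 * psY ^ 4 =
      monomial (bidegree 2 1) 2 + monomial (bidegree 0 4) 5 := by
    simp only [monomial_bidegree, psX, psY, map_ofNat]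
    ring
  rw [hg, mul_add]
  simp [annihilatingForm, coeff_bidegree_mul_monomial]
  ring

theorem annihilatingForm_f :
    annihilatingForm (psX ^ 5 + psX ^ 2 * psY ^ 2 + psY ^ 5) = -1 / 2 := by
  have hf : psX ^ 5 + psX ^ 2 * psY ^ 2 + psY ^ 5 =
      monomial (bidegree 5 0) 1 + monomial (bidegree 2 2) 1 + monomial (bidegree 0 5) 1 := by
    simp only [monomial_bidegree, psX, psY, map_one]
    ring
  rw [hf]
  simp [annihilatingForm, coeff_monomial]
  norm_num

theorem f_notMem_idealI : psX ^ 5 + psX ^ 2 * psY ^ 2 + psY ^ 5 ∉ idealI := by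
  intro hf
  obtain ⟨a, b, hab⟩ := Ideal.mem_span_pair.mp hf
  have h := congrArg annihilatingForm hab
  rw [map_add, annihilatingForm_mul_partialX, annihilatingForm_mul_partialY, annihilatingForm_f] at h
  norm_num at h

theorem isUnit_twenty_sub_mul : IsUnit (20 - 125 * psX * psY) := by
  rw [isUnit_iff_constantCoeff]
  simp [psX, psY, map_ofNat]

theorem psX_mul_f_mem_idealI : psX * (psX ^ 5 + psX ^ 2 * psY ^ 2 + psY ^ 5) ∈ idealI := by
  rw [← Ideal.unit_mul_mem_iff_mem _ isUnit_twenty_sub_mul, idealI, Ideal.mem_span_pair]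
  exact ⟨4 * psX ^ 2 - 5 * psY ^ 3 - 25 * psX ^ 3 * psY, 6 * psX * psY - 25 * psX ^ 2 * psY ^ 2,
    by ring⟩

theorem psY_mul_f_mem_idealI : psY * (psX ^ 5 + psX ^ 2 * psY ^ 2 + psY ^ 5) ∈ idealI := by
  rw [← Ideal.unit_mul_mem_iff_mem _ isUnit_twenty_sub_mul, idealI, Ideal.mem_span_pair]
  exact ⟨6 * psX * psY - 25 * psX ^ 2 * psY ^ 2, 4 * psY ^ 2 - 5 * psX ^ 3 - 25 * psX * psY ^ 3,
    by ring⟩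

theorem stmt_10 :
    Ideal.Quotient.mk idealI (psX ^ 5 + psX ^ 2 * psY ^ 2 + psY ^ 5) ≠ 0 ∧
    ∀ u : MvPowerSeries (Fin 2) ℝ ⧸ idealI, ∃ c : ℝ,
      u * Ideal.Quotient.mk idealI (psX ^ 5 + psX ^ 2 * psY ^ 2 + psY ^ 5) =
        c • Ideal.Quotient.mk idealI (psX ^ 5 + psX ^ 2 * psY ^ 2 + psY ^ 5) := by
  refine ⟨fun h => f_notMem_idealI (Ideal.Quotient.eq_zero_iff_mem.mp h), fun u => ?_⟩
  obtain ⟨g, rfl⟩ := Ideal.Quotient.mk_surjective u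
  exact ⟨constantCoeff g, mk_mul_eq_constantCoeff_smul psX_mul_f_mem_idealI psY_mul_f_mem_idealI g⟩
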